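/- Let Λ = (λ_k)_{k≥0} be a strictly increasing sequence of positive real numbers satisfying the Müntz condition Σ_k 1/λ_k < ∞, and let V_Λ : M_Λ^1 → C([0,1]) be the restriction of the Volterra operator, (V_Λ f)(x) = ∫_0^x f(t) dt. Then the distance from V_Λ to the weakly compact operators equals 1/2: inf{‖V_Λ − S‖ : S : M_Λ^1 → C([0,1]) bounded linear and weakly compact} = 1/2. -/

import Mathlib

open MeasureTheory Set

/-- Lebesgue measure restricted to `[0,1]`. -/
noncomputable def mu01 : Measure ℝ := volume.restrict (Icc (0:ℝ) 1)

/-- The Müntz space `M_Λ^1`: the closure in `L¹([0,1])` of the linear span of the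
monomials `t ↦ t ^ Λ k`. -/
noncomputable def muntzSpace (Λ : ℕ → ℝ) : Submodule ℝ (Lp ℝ 1 mu01) :=
  (Submodule.span ℝ {f : Lp ℝ 1 mu01 |
    ∃ k : ℕ, (f : ℝ → ℝ) =ᵐ[mu01] fun t => t ^ Λ k}).topologicalClosure

/-- A bounded linear operator between normed spaces is weakly compact if the closure,
in the weak topology of the codomain, of the image of the closed unit ball is compact. -/
def IsWeaklyCompactOperator {X Y : Type*} [NormedAddCommGroup X] [NormedSpace ℝ X]
    [NormedAddCommGroup Y] [NormedSpace ℝ Y] (S : X →L[ℝ] Y) : Prop :=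
  IsCompact (closure ((toWeakSpace ℝ Y) '' (⇑S '' Metric.closedBall 0 1)))

/-!
The rank-one operator `f ↦ (½ ∫₀¹ f) · 𝟙` is weakly compact and lies at distance at most `½`
from `V_Λ`, since `∫₀ˣ f - ½ ∫₀¹ f = ½ (∫₀ˣ f - ∫ₓ¹ f)`. Conversely, the normalized monomials
`g_k = (λ_k + 1) t^{λ_k}` have norm one and `V_Λ g_k = x^{λ_k + 1}`, which tends pointwise to the
indicator of `{1}` because `λ_k → ∞`. For a weakly compact `S`, the images `S g_k` have a weak
limit point `h` along an ultrafilter, and point evaluations pass to this limit. Evaluating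
`(V_Λ - S) g_k` at `1` and at `t < 1` gives `1 ≤ 2 ‖V_Λ - S‖ + |h 1 - h t|`, and the continuity
of `h` at `1` yields `‖V_Λ - S‖ ≥ ½`.
-/

open Filter Topology

section WeaklyCompact

variable {X Y : Type*} [NormedAddCommGroup X] [NormedSpace ℝ X]
  [NormedAddCommGroup Y] [NormedSpace ℝ Y]

lemma continuous_dual_apply_toWeakSpace_symm (φ : StrongDual ℝ Y) :
    Continuous fun y : WeakSpace ℝ Y => φ ((toWeakSpace ℝ Y).symm y) :=
  WeakBilin.eval_continuous _ φ

lemma IsWeaklyCompactOperator.exists_forall_tendsto_dual {S : X →L[ℝ] Y}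
    (hS : IsWeaklyCompactOperator S) {ι : Type*} {x : ι → X} (hx : ∀ i, ‖x i‖ ≤ 1)
    (𝒰 : Ultrafilter ι) :
    ∃ y : Y, ∀ φ : StrongDual ℝ Y, Tendsto (fun i => φ (S (x i))) 𝒰 (𝓝 (φ y)) := by
  have hball : ∀ i, toWeakSpace ℝ Y (S (x i)) ∈
      closure (toWeakSpace ℝ Y '' (S '' Metric.closedBall 0 1)) := fun i =>
    subset_closure ⟨S (x i), ⟨x i, mem_closedBall_zero_iff.2 (hx i), rfl⟩, rfl⟩
  obtain ⟨w, -, hw⟩ := hS.ultrafilter_le_nhds (𝒰.map fun i => toWeakSpace ℝ Y (S (x i)))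
    (le_principal_iff.2 (mem_map.2 (univ_mem' hball)))
  exact ⟨(toWeakSpace ℝ Y).symm w, fun φ =>
    ((continuous_dual_apply_toWeakSpace_symm φ).tendsto w).comp hw⟩

lemma isWeaklyCompactOperator_smulRight (L : StrongDual ℝ X) (y : Y) :
    IsWeaklyCompactOperator (L.smulRight y) := by
  have hK : IsCompact ((fun c : ℝ => toWeakSpace ℝ Y (c • y)) '' Icc (-‖L‖) ‖L‖) :=
    isCompact_Icc.image <|
      (toWeakSpaceCLM ℝ Y).continuous.comp (continuous_id.smul continuous_const)
  refine hK.of_isClosed_subset isClosed_closure (closure_minimal ?_ hK.isClosed)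
  rintro _ ⟨_, ⟨f, hf, rfl⟩, rfl⟩
  have hLf : |L f| ≤ ‖L‖ :=
    (L.le_opNorm f).trans (mul_le_of_le_one_right (norm_nonneg _) (mem_closedBall_zero_iff.1 hf))
  exact ⟨L f, abs_le.1 hLf, rfl⟩

end WeaklyCompact

section ContinuousFunctions

variable {X α : Type*} [NormedAddCommGroup X] [NormedSpace ℝ X]
  [TopologicalSpace α] [CompactSpace α]

lemma one_le_two_mul_opNorm_sub_add (T S : X →L[ℝ] C(α, ℝ)) {x : X} (hx : ‖x‖ ≤ 1)
    {p : α} (hp : T x p = 1) (t : α) :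
    1 ≤ 2 * ‖T - S‖ + |S x p - S x t| + |T x t| := by
  have hdiff (s : α) : |T x s - S x s| ≤ ‖T - S‖ :=
    calc |T x s - S x s| = ‖(T - S) x s‖ := rfl
      _ ≤ ‖(T - S) x‖ := ContinuousMap.norm_coe_le_norm _ s
      _ ≤ ‖T - S‖ := ((T - S).le_opNorm_of_le hx).trans_eq (mul_one _)
  have hp' := hdiff p
  rw [hp] at hp'
  linarith [le_abs_self (1 - S x p), neg_abs_le (T x t - S x t), hdiff t,
    le_abs_self (S x p - S x t), le_abs_self (T x t)]

theorem half_le_opNorm_sub_of_isWeaklyCompactOperator (T S : X →L[ℝ] C(α, ℝ))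
    (hS : IsWeaklyCompactOperator S) {p : α} [(𝓝[≠] p).NeBot] {x : ℕ → X}
    (hx : ∀ k, ‖x k‖ ≤ 1) (hTp : ∀ k, T (x k) p = 1)
    (hT : ∀ t ≠ p, Tendsto (fun k => T (x k) t) atTop (𝓝 0)) :
    1 / 2 ≤ ‖T - S‖ := by
  set 𝒰 : Ultrafilter ℕ := Ultrafilter.of atTop
  obtain ⟨h, hh⟩ := hS.exists_forall_tendsto_dual hx 𝒰
  have heval (s : α) : Tendsto (fun k => S (x k) s) 𝒰 (𝓝 (h s)) :=
    hh (ContinuousMap.evalCLM ℝ s)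
  have hoff : ∀ t ≠ p, 1 ≤ 2 * ‖T - S‖ + |h p - h t| := by
    intro t ht
    have hlim := ((tendsto_const_nhds (x := 2 * ‖T - S‖)).add ((heval p).sub (heval t)).abs).add
      ((hT t ht).mono_left (Ultrafilter.of_le _)).abs
    simpa using ge_of_tendsto' hlim fun k => one_le_two_mul_opNorm_sub_add T S (hx k) (hTp k) t
  have hcont : Tendsto (fun t => 2 * ‖T - S‖ + |h p - h t|) (𝓝[≠] p)
      (𝓝 (2 * ‖T - S‖ + |h p - h p|)) :=
    (tendsto_const_nhds.add (tendsto_const_nhds.sub (h.continuous.tendsto p)).abs).mono_left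
      nhdsWithin_le_nhds
  have hlim := ge_of_tendsto hcont (eventually_nhdsWithin_of_forall hoff)
  simp only [sub_self, abs_zero, add_zero] at hlim
  linarith

end ContinuousFunctions

lemma abs_setIntegral_sub_half_integral_le {β : Type*} [MeasurableSpace β] {μ : Measure β}
    {f : β → ℝ} (hf : Integrable f μ) {s : Set β} (hs : MeasurableSet s) :
    |∫ a in s, f a ∂μ - 1 / 2 * ∫ a, f a ∂μ| ≤ 1 / 2 * ∫ a, |f a| ∂μ := by
  rw [← integral_add_compl hs hf, ← integral_add_compl hs hf.abs]
  have hs' := abs_integral_le_integral_abs (f := f) (μ := μ.restrict s)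
  have hsc := abs_integral_le_integral_abs (f := f) (μ := μ.restrict sᶜ)
  rw [abs_le] at *
  constructor <;> linarith [hs'.1, hs'.2, hsc.1, hsc.2]

noncomputable def halfIntegralOperator (E : Submodule ℝ (Lp ℝ 1 mu01)) :
    E →L[ℝ] C(Icc (0:ℝ) 1, ℝ) :=
  ((1 / 2 : ℝ) • (L1.integralCLM ∘L E.subtypeL)).smulRight (1 : C(Icc (0:ℝ) 1, ℝ))

lemma halfIntegralOperator_apply (E : Submodule ℝ (Lp ℝ 1 mu01)) (f : E) (x : Icc (0:ℝ) 1) :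
    halfIntegralOperator E f x = 1 / 2 * ∫ t, ((f : Lp ℝ 1 mu01) : ℝ → ℝ) t ∂mu01 := by
  simp only [halfIntegralOperator, ContinuousLinearMap.smulRight_apply,
    FunLike.coe_smul, ContinuousLinearMap.coe_comp, Pi.smul_apply,
    Function.comp_apply, Submodule.subtypeL_apply, smul_eq_mul, ContinuousMap.smul_apply,
    ContinuousMap.one_apply, mul_one]
  rw [← L1.integral_eq, L1.integral_eq_integral]

lemma opNorm_sub_halfIntegralOperator_le (E : Submodule ℝ (Lp ℝ 1 mu01))
    (V : E →L[ℝ] C(Icc (0:ℝ) 1, ℝ))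
    (hV : ∀ (f : E) (x : Icc (0:ℝ) 1),
      V f x = ∫ t in Ioc (0:ℝ) (x:ℝ), ((f : Lp ℝ 1 mu01) : ℝ → ℝ) t ∂mu01) :
    ‖V - halfIntegralOperator E‖ ≤ 1 / 2 := by
  refine ContinuousLinearMap.opNorm_le_bound _ (by norm_num) fun f => ?_
  refine (ContinuousMap.norm_le _ (by positivity)).2 fun x => ?_
  rw [sub_apply, ContinuousMap.sub_apply, hV, halfIntegralOperator_apply, Real.norm_eq_abs,
    show ‖f‖ = ‖(f : Lp ℝ 1 mu01)‖ from rfl, L1.norm_eq_integral_norm]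
  simpa only [Real.norm_eq_abs] using
    abs_setIntegral_sub_half_integral_le (L1.integrable_coeFn (f : Lp ℝ 1 mu01)) measurableSet_Ioc

lemma mu01_eq_restrict_Ioc : mu01 = volume.restrict (Ioc (0:ℝ) 1) :=
  Measure.restrict_congr_set Ioc_ae_eq_Icc.symm

lemma mu01_restrict_Ioc {x : ℝ} (hx : x ≤ 1) :
    mu01.restrict (Ioc 0 x) = volume.restrict (Ioc 0 x) := by
  rw [mu01_eq_restrict_Ioc, Measure.restrict_restrict measurableSet_Ioc,
    inter_eq_left.2 (Ioc_subset_Ioc_right hx)]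

lemma memLp_one_rpow_mu01 {r : ℝ} (hr : 0 ≤ r) : MemLp (fun t : ℝ => t ^ r) 1 mu01 :=
  memLp_one_iff_integrable.2 (Real.continuous_rpow_const hr).integrableOn_Icc

noncomputable def normalizedMonomial {r : ℝ} (hr : 0 ≤ r) : Lp ℝ 1 mu01 :=
  (r + 1) • (memLp_one_rpow_mu01 hr).toLp _

lemma coeFn_normalizedMonomial {r : ℝ} (hr : 0 ≤ r) :
    normalizedMonomial hr =ᵐ[mu01] fun t => (r + 1) * t ^ r := by
  filter_upwards [Lp.coeFn_smul (r + 1) ((memLp_one_rpow_mu01 hr).toLp _),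
    (memLp_one_rpow_mu01 hr).coeFn_toLp] with t hsmul hpow
  rw [normalizedMonomial, hsmul, Pi.smul_apply, hpow, smul_eq_mul]

lemma setIntegral_Ioc_normalizedMonomial {r : ℝ} (hr : 0 ≤ r) {x : ℝ} (hx : x ∈ Icc (0:ℝ) 1) :
    ∫ t in Ioc 0 x, normalizedMonomial hr t ∂mu01 = x ^ (r + 1) := by
  rw [integral_congr_ae (ae_restrict_of_ae (coeFn_normalizedMonomial hr)), mu01_restrict_Ioc hx.2,
    integral_const_mul, ← intervalIntegral.integral_of_le hx.1,
    integral_rpow (Or.inl (by linarith)), Real.zero_rpow (by linarith), sub_zero]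
  field_simp

lemma norm_normalizedMonomial {r : ℝ} (hr : 0 ≤ r) : ‖normalizedMonomial hr‖ = 1 := by
  have hmem : ∀ᵐ t ∂mu01, t ∈ Ioc (0:ℝ) 1 := by
    rw [mu01_eq_restrict_Ioc]
    exact ae_restrict_mem measurableSet_Ioc
  calc ‖normalizedMonomial hr‖ = ∫ t, normalizedMonomial hr t ∂mu01 := by
        rw [L1.norm_eq_integral_norm]
        refine integral_congr_ae ?_
        filter_upwards [coeFn_normalizedMonomial hr, hmem] with t ht htI
        rw [ht, Real.norm_of_nonneg (by have := Real.rpow_nonneg htI.1.le r; positivity)]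
    _ = ∫ t in Ioc 0 1, normalizedMonomial hr t ∂mu01 := by
        rw [Measure.restrict_eq_self_of_ae_mem hmem]
    _ = 1 := by
        rw [setIntegral_Ioc_normalizedMonomial hr (right_mem_Icc.2 zero_le_one), Real.one_rpow]

lemma normalizedMonomial_mem_muntzSpace (Λ : ℕ → ℝ) (k : ℕ) (hk : 0 ≤ Λ k) :
    normalizedMonomial hk ∈ muntzSpace Λ :=
  Submodule.smul_mem _ _ <| Submodule.le_topologicalClosure _ <|
    Submodule.subset_span ⟨k, (memLp_one_rpow_mu01 hk).coeFn_toLp⟩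

lemma tendsto_atTop_of_summable_one_div {Λ : ℕ → ℝ} (hpos : ∀ k, 0 < Λ k)
    (hsum : Summable fun k => 1 / Λ k) : Tendsto Λ atTop atTop := by
  have hinv : Tendsto (fun k => 1 / Λ k) atTop (𝓝[>] 0) :=
    tendsto_nhdsWithin_iff.2 ⟨hsum.tendsto_atTop_zero,
      Eventually.of_forall fun k => one_div_pos.2 (hpos k)⟩
  exact (tendsto_inv_nhdsGT_zero.comp hinv).congr fun k => by simp

lemma half_le_opNorm_volterra_sub {Λ : ℕ → ℝ} (hpos : ∀ k, 0 < Λ k)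
    (hmuntz : Summable fun k => 1 / Λ k) (V : ↥(muntzSpace Λ) →L[ℝ] C(Icc (0:ℝ) 1, ℝ))
    (hV : ∀ (f : ↥(muntzSpace Λ)) (x : Icc (0:ℝ) 1),
      V f x = ∫ t in Ioc (0:ℝ) (x:ℝ), ((f : Lp ℝ 1 mu01) : ℝ → ℝ) t ∂mu01)
    (S : ↥(muntzSpace Λ) →L[ℝ] C(Icc (0:ℝ) 1, ℝ)) (hS : IsWeaklyCompactOperator S) :
    1 / 2 ≤ ‖V - S‖ := by
  set g : ℕ → muntzSpace Λ := fun k =>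
    ⟨normalizedMonomial (hpos k).le, normalizedMonomial_mem_muntzSpace Λ k (hpos k).le⟩
  have hVg (k : ℕ) (x : Icc (0:ℝ) 1) : V (g k) x = (x : ℝ) ^ (Λ k + 1) :=
    (hV _ x).trans (setIntegral_Ioc_normalizedMonomial (hpos k).le x.2)
  have hg (k : ℕ) : ‖g k‖ ≤ 1 := (norm_normalizedMonomial (hpos k).le).le
  refine half_le_opNorm_sub_of_isWeaklyCompactOperator V S hS
    (p := ⟨1, right_mem_Icc.2 zero_le_one⟩) hg (fun k => (hVg k _).trans (Real.one_rpow _)) fun t ht => ?_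
  have ht1 : (t : ℝ) < 1 := t.2.2.lt_of_ne fun h => ht (Subtype.ext h)
  simp only [hVg]
  exact (tendsto_rpow_atTop_of_base_lt_one _ (by linarith [t.2.1]) ht1).comp
    (tendsto_atTop_add_const_right _ 1 (tendsto_atTop_of_summable_one_div hpos hmuntz))

theorem volterra_restriction_weakEssentialNorm_eq_half_general
    (Λ : ℕ → ℝ) (hpos : ∀ k, 0 < Λ k)
    (hmuntz : Summable fun k => 1 / Λ k)
    (V : ↥(muntzSpace Λ) →L[ℝ] C(Icc (0:ℝ) 1, ℝ))
    (hV : ∀ (f : ↥(muntzSpace Λ)) (x : Icc (0:ℝ) 1),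
      V f x = ∫ t in Ioc (0:ℝ) (x:ℝ), ((f : Lp ℝ 1 mu01) : ℝ → ℝ) t ∂mu01) :
    sInf {c : ℝ | ∃ S : ↥(muntzSpace Λ) →L[ℝ] C(Icc (0:ℝ) 1, ℝ),
      IsWeaklyCompactOperator S ∧ c = ‖V - S‖} = 1/2 := by
  have hlower := half_le_opNorm_volterra_sub hpos hmuntz V hV
  have hS₀ : IsWeaklyCompactOperator (halfIntegralOperator (muntzSpace Λ)) :=
    isWeaklyCompactOperator_smulRight _ _
  refine IsLeast.csInf_eq ⟨⟨_, hS₀, le_antisymm (hlower _ hS₀)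
    (opNorm_sub_halfIntegralOperator_le _ V hV)⟩, ?_⟩
  rintro c ⟨S, hS, rfl⟩
  exact hlower S hS

/-- Under the Müntz condition, the distance from the restricted
Volterra operator `V_Λ : M_Λ^1 → C([0,1])` to the weakly compact operators equals `1/2`. -/
theorem volterra_restriction_weakEssentialNorm_eq_half
    (Λ : ℕ → ℝ) (hmono : StrictMono Λ) (hpos : ∀ k, 0 < Λ k)
    (hmuntz : Summable fun k => 1 / Λ k)
    (V : ↥(muntzSpace Λ) →L[ℝ] C(Icc (0:ℝ) 1, ℝ))
    (hV : ∀ (f : ↥(muntzSpace Λ)) (x : Icc (0:ℝ) 1),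
      V f x = ∫ t in Ioc (0:ℝ) (x:ℝ), ((f : Lp ℝ 1 mu01) : ℝ → ℝ) t ∂mu01) :
    sInf {c : ℝ | ∃ S : ↥(muntzSpace Λ) →L[ℝ] C(Icc (0:ℝ) 1, ℝ),
      IsWeaklyCompactOperator S ∧ c = ‖V - S‖} = 1/2 :=
  volterra_restriction_weakEssentialNorm_eq_half_general Λ hpos hmuntz V hV
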